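/- Lower semi-continuity under approximation from above: let (Ω, d) be a metric space and μ_m, μ Borel probability measures such that μ_m → μ in total variation and there exist constants c_m → 1 with μ_m(A) ≥ μ(A)/c_m for all Borel A. Then for every t ∈ (0,1), liminf_{m→∞} I_{μ_m}(t) ≥ liminf_{s→t} I_μ(s), where I_ν denotes the isoperimetric profile of (Ω, d, ν). -/

import Mathlib

/-!
If `μ ≤ c_m μ_m` setwise, then the Minkowski boundary measures satisfy
`μ⁺(A) ≤ c_m μ_m⁺(A)`, so `μ_m⁺(A) ≥ I_μ(μ(A)) / c_m`. When `μ_m(A) = t`, total variation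
convergence puts `μ(A)` close to `t`, uniformly in `A`, where `I_μ` is almost at least its
`liminf` at `t`; letting `c_m → 1` gives the claim.
-/

open MeasureTheory Filter

/-- Minkowski (exterior) boundary measure. -/
noncomputable def boundaryMeasure {Ω : Type*} [PseudoMetricSpace Ω] [MeasurableSpace Ω]
    (μ : Measure Ω) (A : Set Ω) : ENNReal :=
  liminf (fun ε : ℝ =>
      ENNReal.ofReal (((μ (Metric.thickening ε A)).toReal - (μ A).toReal) / ε))
    (nhdsWithin 0 (Set.Ioi 0))

/-- Isoperimetric profile of a metric probability space. -/
noncomputable def isoProfile {Ω : Type*} [PseudoMetricSpace Ω] [MeasurableSpace Ω]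
    (μ : Measure Ω) (t : ℝ) : ENNReal :=
  ⨅ (A : Set Ω) (_ : MeasurableSet A) (_ : (μ A).toReal = t), boundaryMeasure μ A

open Metric Topology
open scoped ENNReal

section

variable {Ω : Type*} [PseudoMetricSpace Ω] [MeasurableSpace Ω]

lemma boundaryMeasure_eq_liminf (μ : Measure Ω) [IsFiniteMeasure μ] {A : Set Ω}
    (hA : MeasurableSet A) :
    boundaryMeasure μ A =
      liminf (fun ε : ℝ => μ (thickening ε A \ A) / ENNReal.ofReal ε) (𝓝[>] 0) := by
  refine liminf_congr (eventually_nhdsWithin_of_forall fun ε (hε : 0 < ε) => ?_)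
  rw [← measureReal_def, ← measureReal_def,
    ← measureReal_sdiff (self_subset_thickening hε A) hA, ENNReal.ofReal_div_of_pos hε,
    measureReal_def, ENNReal.ofReal_toReal (measure_ne_top μ _)]

lemma boundaryMeasure_le_mul [OpensMeasurableSpace Ω] {μ ν : Measure Ω} [IsFiniteMeasure μ]
    [IsFiniteMeasure ν] {C : ℝ≥0∞} (hC : C ≠ ⊤)
    (hμν : ∀ B, MeasurableSet B → μ B ≤ C * ν B) {A : Set Ω} (hA : MeasurableSet A) :
    boundaryMeasure μ A ≤ C * boundaryMeasure ν A := by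
  rw [boundaryMeasure_eq_liminf μ hA, boundaryMeasure_eq_liminf ν hA,
    ← ENNReal.liminf_const_mul_of_ne_top hC]
  refine liminf_le_liminf (Eventually.of_forall fun ε => ?_)
  rw [← mul_div_assoc]
  exact ENNReal.div_le_div_right (hμν _ (isOpen_thickening.measurableSet.diff hA)) _

lemma isoProfile_le_boundaryMeasure (μ : Measure Ω) {A : Set Ω} (hA : MeasurableSet A) :
    isoProfile μ (μ A).toReal ≤ boundaryMeasure μ A :=
  iInf_le_of_le A (iInf_le_of_le hA (iInf_le _ rfl))

lemma div_le_isoProfile [OpensMeasurableSpace Ω] {μ ν : Measure Ω} [IsFiniteMeasure μ]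
    [IsFiniteMeasure ν] {C : ℝ≥0∞} (hC : C ≠ ⊤)
    (hμν : ∀ B, MeasurableSet B → μ B ≤ C * ν B) {δ t : ℝ} {b : ℝ≥0∞}
    (hclose : ∀ B, MeasurableSet B → |(ν B).toReal - (μ B).toReal| < δ)
    (hb : ∀ s, dist s t < δ → b ≤ isoProfile μ s) :
    b / C ≤ isoProfile ν t := by
  refine le_iInf fun A => le_iInf fun hA => le_iInf fun hνA => ?_
  have hμA : dist (μ A).toReal t < δ := by
    rw [Real.dist_eq, abs_sub_comm, ← hνA]
    exact hclose A hA
  refine ENNReal.div_le_of_le_mul' ?_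
  calc b ≤ isoProfile μ (μ A).toReal := hb _ hμA
    _ ≤ boundaryMeasure μ A := isoProfile_le_boundaryMeasure μ hA
    _ ≤ C * boundaryMeasure ν A := boundaryMeasure_le_mul hC hμν hA

end

theorem profile_lsc_approx_from_above_general {Ω : Type*} [MetricSpace Ω] [MeasurableSpace Ω]
    [BorelSpace Ω]
    (μ : Measure Ω) [IsProbabilityMeasure μ]
    (μs : ℕ → Measure Ω) (hprob : ∀ m, IsProbabilityMeasure (μs m))
    (htv : ∀ ε > (0 : ℝ), ∀ᶠ m in atTop, ∀ B : Set Ω, MeasurableSet B →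
      |((μs m) B).toReal - (μ B).toReal| ≤ ε)
    (c : ℕ → ℝ) (hc : Tendsto c atTop (nhds 1))
    (habove : ∀ m, ∀ A : Set Ω, MeasurableSet A →
      μ A / ENNReal.ofReal (c m) ≤ (μs m) A)
    (t : ℝ) :
    liminf (fun s => isoProfile μ s) (nhds t)
      ≤ liminf (fun m => isoProfile (μs m) t) atTop := by
  refine (le_liminf_iff).2 fun b hb => ?_
  obtain ⟨b', hbb', hb'⟩ := exists_between hb
  obtain ⟨δ, hδ, hprofile⟩ := Metric.eventually_nhds_iff.1 (eventually_lt_of_lt_liminf hb')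
  have hratio : Tendsto (fun m => b' / ENNReal.ofReal (c m)) atTop (𝓝 b') := by
    simpa using ENNReal.Tendsto.div tendsto_const_nhds (.inr one_ne_zero)
      (by simpa using ENNReal.tendsto_ofReal hc) (.inl ENNReal.one_ne_top)
  filter_upwards [htv (δ / 2) (half_pos hδ), hratio.eventually_const_lt hbb'] with m hclose hlt
  have := hprob m
  have hdom : ∀ B, MeasurableSet B → μ B ≤ ENNReal.ofReal (c m) * μs m B := fun B hB =>
    (ENNReal.div_le_iff_le_mul (.inr (measure_ne_top _ B)) (.inl ENNReal.ofReal_ne_top)).1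
      (habove m B hB) |>.trans_eq (mul_comm _ _)
  exact hlt.trans_le (div_le_isoProfile ENNReal.ofReal_ne_top hdom
    (fun B hB => (hclose B hB).trans_lt (half_lt_self hδ)) fun s hs => (hprofile hs).le)

/-- lower semi-continuity of the profile under approximation from above:
if `μ_m → μ` in total variation and `μ_m(A) ≥ μ(A)/c_m` for all Borel `A` with `c_m → 1`,
then `liminf_m I_{μ_m}(t) ≥ liminf_{s→t} I_μ(s)` for every `t ∈ (0,1)`. -/
theorem profile_lsc_approx_from_above {Ω : Type*} [MetricSpace Ω] [MeasurableSpace Ω]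
    [BorelSpace Ω]
    (μ : Measure Ω) [IsProbabilityMeasure μ]
    (μs : ℕ → Measure Ω) (hprob : ∀ m, IsProbabilityMeasure (μs m))
    (htv : ∀ ε > (0 : ℝ), ∀ᶠ m in atTop, ∀ B : Set Ω, MeasurableSet B →
      |((μs m) B).toReal - (μ B).toReal| ≤ ε)
    (c : ℕ → ℝ) (hc : Tendsto c atTop (nhds 1)) (hcpos : ∀ m, 0 < c m)
    (habove : ∀ m, ∀ A : Set Ω, MeasurableSet A →
      μ A / ENNReal.ofReal (c m) ≤ (μs m) A)
    (t : ℝ) (ht : t ∈ Set.Ioo (0 : ℝ) 1) :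
    liminf (fun s => isoProfile μ s) (nhds t)
      ≤ liminf (fun m => isoProfile (μs m) t) atTop :=
  profile_lsc_approx_from_above_general μ μs hprob htv c hc habove t
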